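/- arXiv:2010.06797 — 2 statements merged into one kernel-verified Lean document; each statement's English description precedes it below -/
import Mathlib

section
/- For any sequence of rewards R : ℕ → ℝ and discounts γ : ℕ → ℝ with 0 ≤ R(i) ≤ 1 - r and r ≤ γ(i) ≤ 1 for all i (where 0 ≤ r ≤ 1, and at each step either R(i) = 1 - r with γ(i) = r, or R(i) = 0 with γ(i) ≤ 1), the total discounted return D = Σ_{i=0}^∞ (Π_{j=0}^{i-1} γ(j)) · R(i) satisfies 0 ≤ D ≤ 1. -/
/-! Return collected plus discount mass remaining never exceeds `1`: at step `i` the bound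
`R i ≤ 1 - γ i` converts the remaining mass `∏_{j<i} γ j` into at most as much reward as it loses
to discounting. So the partial sums are at most `1 - ∏_{j<n} γ j ≤ 1`, and the series of
nonnegative terms converges to at most `1`. -/

open Finset

section

variable {α : Type*} [CommRing α] [PartialOrder α] [IsOrderedRing α]

theorem sum_range_prod_mul_le_one_sub_prod {γ R : ℕ → α} (hγ : ∀ i, 0 ≤ γ i)
    (hRγ : ∀ i, R i ≤ 1 - γ i) (n : ℕ) :
    ∑ i ∈ range n, (∏ j ∈ range i, γ j) * R i ≤ 1 - ∏ j ∈ range n, γ j := by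
  induction n with
  | zero => simp
  | succ n ih =>
    have hstep : (∏ j ∈ range n, γ j) * R n ≤ (∏ j ∈ range n, γ j) * (1 - γ n) :=
      mul_le_mul_of_nonneg_left (hRγ n) (prod_nonneg fun j _ => hγ j)
    calc ∑ i ∈ range (n + 1), (∏ j ∈ range i, γ j) * R i
        = ∑ i ∈ range n, (∏ j ∈ range i, γ j) * R i + (∏ j ∈ range n, γ j) * R n :=
          sum_range_succ _ _
      _ ≤ (1 - ∏ j ∈ range n, γ j) + (∏ j ∈ range n, γ j) * (1 - γ n) := add_le_add ih hstep
      _ = 1 - ∏ j ∈ range (n + 1), γ j := by rw [prod_range_succ]; ring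

theorem sum_range_prod_mul_le_one {γ R : ℕ → α} (hγ : ∀ i, 0 ≤ γ i)
    (hRγ : ∀ i, R i ≤ 1 - γ i) (n : ℕ) :
    ∑ i ∈ range n, (∏ j ∈ range i, γ j) * R i ≤ 1 :=
  (sum_range_prod_mul_le_one_sub_prod hγ hRγ n).trans
    (sub_le_self _ (prod_nonneg fun j _ => hγ j))

end

theorem tsum_prod_mul_le_one {γ R : ℕ → ℝ} (hγ : ∀ i, 0 ≤ γ i) (hR : ∀ i, 0 ≤ R i)
    (hRγ : ∀ i, R i ≤ 1 - γ i) :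
    ∑' i, (∏ j ∈ range i, γ j) * R i ≤ 1 := by
  have hterm : ∀ i, 0 ≤ (∏ j ∈ range i, γ j) * R i :=
    fun i => mul_nonneg (prod_nonneg fun j _ => hγ j) (hR i)
  have hbound := sum_range_prod_mul_le_one hγ hRγ
  exact (summable_of_sum_range_le hterm hbound).tsum_le_of_sum_range_le hbound

theorem discounted_return_in_unit_interval_general (R γ : ℕ → ℝ) (r : ℝ)
    (hr0 : 0 ≤ r)
    (hR : ∀ i, 0 ≤ R i ∧ R i ≤ 1 - r)
    (hγ : ∀ i, r ≤ γ i ∧ γ i ≤ 1)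
    (hbranch : ∀ i, (R i = 1 - r ∧ γ i = r) ∨ (R i = 0 ∧ γ i ≤ 1)) :
    0 ≤ ∑' i : ℕ, (∏ j ∈ Finset.range i, γ j) * R i ∧
      ∑' i : ℕ, (∏ j ∈ Finset.range i, γ j) * R i ≤ 1 := by
  have hγ0 : ∀ i, 0 ≤ γ i := fun i => hr0.trans (hγ i).1
  have hR0 : ∀ i, 0 ≤ R i := fun i => (hR i).1
  have hRγ : ∀ i, R i ≤ 1 - γ i := by
    intro i
    rcases hbranch i with ⟨hRi, hγi⟩ | ⟨hRi, hγi⟩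
    · rw [hRi, hγi]
    · rw [hRi]; linarith
  exact ⟨tsum_nonneg fun i => mul_nonneg (prod_nonneg fun j _ => hγ0 j) (hR0 i),
    tsum_prod_mul_le_one hγ0 hR0 hRγ⟩

/-- The total discounted return `D = Σ_i (Π_{j<i} γ j) * R i` of a
reward/discount scheme with `R i ∈ [0, 1-r]`, `γ i ∈ [r, 1]`, where at each step
either `R i = 1 - r` with `γ i = r`, or `R i = 0` with `γ i ≤ 1`, satisfies `0 ≤ D ≤ 1`. -/
theorem discounted_return_in_unit_interval (R γ : ℕ → ℝ) (r : ℝ)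
    (hr0 : 0 ≤ r) (hr1 : r ≤ 1)
    (hR : ∀ i, 0 ≤ R i ∧ R i ≤ 1 - r)
    (hγ : ∀ i, r ≤ γ i ∧ γ i ≤ 1)
    (hbranch : ∀ i, (R i = 1 - r ∧ γ i = r) ∨ (R i = 0 ∧ γ i ≤ 1)) :
    0 ≤ ∑' i : ℕ, (∏ j ∈ Finset.range i, γ j) * R i ∧
      ∑' i : ℕ, (∏ j ∈ Finset.range i, γ j) * R i ≤ 1 :=
  discounted_return_in_unit_interval_general R γ r hr0 hR hγ hbranch
end

section
/- Let a run r = q₀q₁... of the embedded automaton Ā (states augmented with frontier set T updated by f_V) visit some accepting index set F̄_i infinitely often for every i ∈ {1,...,f}. Then along the run, the frontier T is reset (i.e., becomes empty and is reinitialized) infinitely often, equivalently there are infinitely many complete 'rounds' in which every accepting set F₁,...,F_f of the base automaton is visited. -/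
open scoped Classical

/-- Tracking-frontier update: remove from `T` all indices `j` whose accepting set `F j`
contains the current state; if this would empty a nonempty visit, reset to all indices
minus the just-visited ones. -/
noncomputable def trackFrontier {Q ι : Type*} (F : ι → Set Q) (q : Q) (T : Set ι) : Set ι :=
  if (T \ {j | q ∈ F j}) = ∅ ∧ {j | q ∈ F j}.Nonempty then Set.univ \ {j | q ∈ F j}
  else T \ {j | q ∈ F j}

/-- Frontier sequence along a run: `T₀ = F` (all indices), `T_{n+1} = f_V(q_{n+1}, T_n)`. -/
noncomputable def frontierSeq {Q ι : Type*} (F : ι → Set Q) (run : ℕ → Q) : ℕ → Set ι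
  | 0 => Set.univ
  | n + 1 => trackFrontier F (run (n + 1)) (frontierSeq F run n)

/-!
Once the resets stop, the frontier can only shrink. An index `i` visited at an accepting step
while in the frontier is removed from it at that step and never returns, so `F̄_i` cannot be
visited again, contradicting the hypothesis.
-/

theorem trackFrontier_of_not_reset {Q ι : Type*} {F : ι → Set Q} {x : Q} {T : Set ι}
    (h : ¬ ((T \ {j | x ∈ F j}) = ∅ ∧ {j | x ∈ F j}.Nonempty)) :
    trackFrontier F x T = T \ {j | x ∈ F j} :=
  if_neg h

def frontierResets {Q ι : Type*} (F : ι → Set Q) (q : ℕ → Q) : Set ℕ :=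
  {n | (frontierSeq F q n \ {j | q (n + 1) ∈ F j}) = ∅ ∧ {j | q (n + 1) ∈ F j}.Nonempty}

section NoReset

variable {Q ι : Type*} {F : ι → Set Q} {q : ℕ → Q} {N : ℕ}

theorem frontierSeq_antitoneOn_of_no_reset
    (hN : ∀ n ≥ N, n ∉ frontierResets F q) :
    AntitoneOn (frontierSeq F q) (Set.Ici N) :=
  antitoneOn_nat_Ici_of_succ_le fun n hn =>
    (trackFrontier_of_not_reset (hN n hn)).trans_le Set.sdiff_subset

theorem notMem_frontierSeq_of_visit_of_no_reset
    (hN : ∀ n ≥ N, n ∉ frontierResets F q)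
    {i : ι} {a b : ℕ} (ha : N ≤ a) (hab : a < b) (hi : q (a + 1) ∈ F i) :
    i ∉ frontierSeq F q b := by
  intro hb
  have hi' : i ∈ frontierSeq F q (a + 1) :=
    frontierSeq_antitoneOn_of_no_reset hN (Set.mem_Ici.2 (by omega))
      (Set.mem_Ici.2 (by omega)) hab hb
  rw [frontierSeq, trackFrontier_of_not_reset (hN a ha)] at hi'
  exact hi'.2 hi

end NoReset

theorem infinitely_many_frontier_resets_general {Q ι : Type*} [Nonempty ι]
    (F : ι → Set Q) (q : ℕ → Q)
    (hacc : ∀ i, {n : ℕ | q (n + 1) ∈ F i ∧ i ∈ frontierSeq F q n}.Infinite) :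
    {n : ℕ | (frontierSeq F q n \ {j | q (n + 1) ∈ F j}) = ∅ ∧
      {j | q (n + 1) ∈ F j}.Nonempty}.Infinite := by
  show (frontierResets F q).Infinite
  by_contra hfin
  obtain ⟨N, hN⟩ := (Set.not_infinite.mp hfin).bddAbove
  have no_reset : ∀ n ≥ N + 1, n ∉ frontierResets F q :=
    fun n hn hreset => (hN hreset).not_gt hn
  obtain ⟨i⟩ := ‹Nonempty ι›
  obtain ⟨a, ⟨haF, -⟩, hNa⟩ := (hacc i).exists_gt N
  obtain ⟨b, ⟨-, hbT⟩, hab⟩ := (hacc i).exists_gt a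
  exact notMem_frontierSeq_of_visit_of_no_reset no_reset hNa hab haF hbT

/-- If a run of the embedded automaton visits every embedded accepting set
`F̄_i = {(q,T) : q ∈ F i ∧ i ∈ T}` infinitely often, then the frontier is reset infinitely
often, i.e. there are infinitely many steps at which the reset branch of `f_V` fires
(the frontier would become empty at an accepting state); equivalently, infinitely many
complete rounds in which every accepting set is visited. -/
theorem infinitely_many_frontier_resets {Q ι : Type*} [Fintype ι] [Nonempty ι]
    (F : ι → Set Q) (q : ℕ → Q)
    (hacc : ∀ i, {n : ℕ | q (n + 1) ∈ F i ∧ i ∈ frontierSeq F q n}.Infinite) :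
    {n : ℕ | (frontierSeq F q n \ {j | q (n + 1) ∈ F j}) = ∅ ∧
      {j | q (n + 1) ∈ F j}.Nonempty}.Infinite :=
  infinitely_many_frontier_resets_general F q hacc
end
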